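/- Let x, y be permutations of [n]. Then the number of interval parking functions (a,b) with O(a) = x and O(b*)* = y equals the product ∏_{i=1}^{n} c_i·d_i. -/

import Mathlib

/-- `o` is the outcome of running parking Algorithm A on preference vector `a`:
car `i` parks in the first unoccupied spot in `[a i, n]`, and every car parks. -/
def IsAOutcome {n : ℕ} (a o : Fin n → Fin n) : Prop :=
  Function.Injective o ∧ ∀ i, a i ≤ o i ∧
    ∀ s, a i ≤ s → s < o i → ∃ j, j < i ∧ o j = s

/-- `a` is a parking function. -/
def IsParkingFunction {n : ℕ} (a : Fin n → Fin n) : Prop :=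
  ∃ o, IsAOutcome a o

/-- `o` is the outcome of running parking Algorithm B on the pair `(a, b)`:
car `i` parks in the first unoccupied spot in `[a i, b i]`, and every car parks. -/
def IsBOutcome {n : ℕ} (a b o : Fin n → Fin n) : Prop :=
  Function.Injective o ∧ ∀ i, a i ≤ o i ∧ o i ≤ b i ∧
    ∀ s, a i ≤ s → s < o i → ∃ j, j < i ∧ o j = s

/-- `(a, b)` is an interval parking function. -/
def IsIPF {n : ℕ} (a b : Fin n → Fin n) : Prop :=
  ∃ o, IsBOutcome a b o

/-- The conjugate (reverse complement) `x*` of `x`, with `x*(i) = n + 1 - x(n + 1 - i)`. -/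
def pconj {n : ℕ} (f : Fin n → Fin n) : Fin n → Fin n :=
  fun i => (f i.rev).rev

/-- The pair `(x, y)` is reachable, `x ⊵_R y`: there is an IPF `(a, b)` with
`O(a) = x` and `O(b*) = y*`. -/
def Reaches {n : ℕ} (x y : Fin n → Fin n) : Prop :=
  ∃ a b : Fin n → Fin n, IsIPF a b ∧ IsAOutcome a x ∧ IsAOutcome (pconj b) (pconj y)

/-- Pseudoreachability `x ≥_P y`: the reflexive-transitive closure of reachability. -/
def PseudoGE {n : ℕ} (x y : Equiv.Perm (Fin n)) : Prop :=
  Relation.ReflTransGen (fun u v : Equiv.Perm (Fin n) => Reaches ⇑u ⇑v) x y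

/-- `#{k ∈ [i] : x(k) ≥ j}` (with `i`, `j` zero-indexed). -/
def bcount {n : ℕ} (x : Fin n → Fin n) (i j : Fin n) : ℕ :=
  (Finset.univ.filter (fun k : Fin n => k ≤ i ∧ j ≤ x k)).card

/-- The Bruhat order `x ≥_B y` on the symmetric group. -/
def BruhatGE {n : ℕ} (x y : Equiv.Perm (Fin n)) : Prop :=
  ∀ i j : Fin n, bcount ⇑y i j ≤ bcount ⇑x i j

/-- The number of inversions (the Coxeter length) of `f`. -/
def invCount {n : ℕ} (f : Fin n → Fin n) : ℕ :=
  (Finset.univ.filter (fun p : Fin n × Fin n => p.1 < p.2 ∧ f p.2 < f p.1)).card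

/-- The adjacent transposition `s_i` exchanging `i` and `i+1` (one-indexed),
as a permutation of `Fin n`. -/
def sgen (n : ℕ) (i : ℕ) : Equiv.Perm (Fin n) :=
  if h : 1 ≤ i ∧ i < n then Equiv.swap ⟨i - 1, by omega⟩ ⟨i, h.2⟩ else 1

/-- Left weak order: `x ≥_W y` iff `x = s_{i₁} ⋯ s_{i_k} · y` with `ℓ(x) = ℓ(y) + k`. -/
def WeakGE {n : ℕ} (x y : Equiv.Perm (Fin n)) : Prop :=
  ∃ l : List ℕ, (∀ i ∈ l, 1 ≤ i ∧ i ≤ n - 1) ∧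
    x = (l.map (sgen n)).prod * y ∧ invCount ⇑x = invCount ⇑y + l.length

/-- The projection `x ↦ x̂` deleting the last position and the value `x(n)`. -/
def hatf {n : ℕ} (x : Fin (n + 1) → Fin (n + 1)) : Fin n → Fin n :=
  fun i =>
    if h : (x i.castSucc).val < (x (Fin.last n)).val
    then ⟨(x i.castSucc).val, by have h1 := (x (Fin.last n)).isLt; omega⟩
    else ⟨(x i.castSucc).val - 1, by have h1 := (x i.castSucc).isLt; have h2 := i.isLt; omega⟩

/-- `lam n f k` is `λ_k` of the permutation of `[n]` with one-line notation `f(1), …, f(n)`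
(one-indexed): `λ_{n-1}(x) = n - x(n)` and `λ_k(x) = λ_k(x̄)` for `k ≤ n - 2`, where
`x̄ ∈ S_{n-1}` is the restriction of `u⁻¹·x` (`u = s_{x(n)} ⋯ s_{n-1}`), concretely
`x̄(i) = x(i)` if `x(i) < x(n)` and `x̄(i) = x(i) - 1` if `x(i) > x(n)`. -/
def lam : ℕ → (ℕ → ℕ) → ℕ → ℕ
  | 0, _, _ => 0
  | n + 1, f, k =>
    if k = n then (n + 1) - f (n + 1)
    else lam n (fun i => if f i < f (n + 1) then f i else f i - 1) k

/-- The one-line notation of `x`, as a one-indexed function `ℕ → ℕ`. -/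
def oneline {n : ℕ} (x : Fin n → Fin n) : ℕ → ℕ :=
  fun i => if h : i - 1 < n then (x ⟨i - 1, h⟩).val + 1 else 0

/-- `y` contains the pattern `σ`. -/
def ContainsPattern {n m : ℕ} (y : Equiv.Perm (Fin n)) (σ : Equiv.Perm (Fin m)) : Prop :=
  ∃ f : Fin m → Fin n, StrictMono f ∧ ∀ j k, y (f j) < y (f k) ↔ σ j < σ k

/-- `x` is an AR (Arndt–Riehl) permutation: `x⁻¹(i) ≤ i + 1` for all `i ∈ [n]`. -/
def IsAR {n : ℕ} (x : Equiv.Perm (Fin n)) : Prop :=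
  ∀ i : Fin n, (x.symm i).val ≤ i.val + 1

/-- `c_i = max{ j ∈ [1, x(i)] : x⁻¹(x(i) - k) ≤ i for all 0 ≤ k ≤ j-1 }` (one-indexed). -/
noncomputable def cval {n : ℕ} (x : Equiv.Perm (Fin n)) (i : Fin n) : ℕ :=
  sSup {j : ℕ | 1 ≤ j ∧ j ≤ (x i).val + 1 ∧
    ∀ k < j, (x.symm ⟨(x i).val - k, by have := (x i).isLt; omega⟩).val ≤ i.val}

/-- `J_i = max{ j ∈ [1, n+1-y(i)] : y⁻¹(y(i)+s) ≥ i for all 0 ≤ s ≤ j-1 }` (one-indexed). -/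
noncomputable def Jval {n : ℕ} (y : Equiv.Perm (Fin n)) (i : Fin n) : ℕ :=
  sSup {j : ℕ | 1 ≤ j ∧ j ≤ n - (y i).val ∧
    ∀ s < j, ∀ h : (y i).val + s < n, i.val ≤ (y.symm ⟨(y i).val + s, h⟩).val}

/-- `d_i = #{ k ∈ [0, J_i - 1] : y(i) + k ≥ x(i) }`. -/
noncomputable def dval {n : ℕ} (x y : Equiv.Perm (Fin n)) (i : Fin n) : ℕ :=
  ((Finset.range (Jval y i)).filter (fun k => (x i).val ≤ (y i).val + k)).card

/-!
Running Algorithm B on `(a, b)` parks every car where Algorithm A on `a` does, so `(a, b)` is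
counted exactly when `O(a) = x`, `x ≤ b` pointwise and `O(b*) = y*`. These conditions constrain
the cars one at a time: `a i` may be any spot of the maximal block of spots ending at `x i` that
are taken by cars `≤ i` under `x` (it has `c_i` spots), and `b i` any spot `≥ x i` of the maximal
block starting at `y i` of spots taken by cars `≥ i` under `y` (it has `J_i` spots, `d_i` of them
`≥ x i`). The set of pairs is therefore a product of intervals.
-/
section

open Finset

variable {n : ℕ}

theorem IsBOutcome.isAOutcome {a b o : Fin n → Fin n} (h : IsBOutcome a b o) :
    IsAOutcome a o :=
  ⟨h.1, fun i => ⟨(h.2 i).1, (h.2 i).2.2⟩⟩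

theorem IsAOutcome.unique {a o o' : Fin n → Fin n} (h : IsAOutcome a o)
    (h' : IsAOutcome a o') : o = o' := by
  funext i
  induction i using WellFoundedLT.induction with
  | _ i ih =>
    rcases lt_trichotomy (o i) (o' i) with hlt | heq | hgt
    · obtain ⟨j, hji, hj⟩ := (h'.2 i).2 (o i) (h.2 i).1 hlt
      exact absurd (h.1 ((ih j hji).trans hj)) hji.ne
    · exact heq
    · obtain ⟨j, hji, hj⟩ := (h.2 i).2 (o' i) (h'.2 i).1 hgt
      exact absurd (h'.1 ((ih j hji).symm.trans hj)) hji.ne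

theorem isIPF_iff_of_isAOutcome {a b o : Fin n → Fin n} (ho : IsAOutcome a o) :
    IsIPF a b ↔ ∀ i, o i ≤ b i := by
  refine ⟨fun ⟨o', ho'⟩ i => ?_, fun h => ⟨o, ho.1, fun i => ⟨(ho.2 i).1, h i, (ho.2 i).2⟩⟩⟩
  rw [← ho'.isAOutcome.unique ho]
  exact (ho'.2 i).2.1

theorem isAOutcome_perm_iff {a : Fin n → Fin n} (x : Equiv.Perm (Fin n)) :
    IsAOutcome a x ↔ ∀ i, a i ≤ x i ∧ ∀ s, a i ≤ s → s < x i → x.symm s < i := by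
  refine ⟨fun h i => ⟨(h.2 i).1, fun s hle hlt => ?_⟩, fun h => ⟨x.injective, fun i =>
    ⟨(h i).1, fun s hle hlt => ⟨x.symm s, (h i).2 s hle hlt, x.apply_symm_apply s⟩⟩⟩⟩
  obtain ⟨j, hji, rfl⟩ := (h.2 i).2 s hle hlt
  simpa using hji

theorem isAOutcome_pconj_iff {b : Fin n → Fin n} (y : Equiv.Perm (Fin n)) :
    IsAOutcome (pconj b) (pconj y) ↔
      ∀ i, y i ≤ b i ∧ ∀ s, y i < s → s ≤ b i → i < y.symm s := by
  have hy : pconj ⇑y = ⇑((Fin.revPerm.trans y).trans Fin.revPerm) := rfl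
  rw [hy, isAOutcome_perm_iff, ← Fin.revPerm.forall_congr_right]
  refine forall_congr' fun i => and_congr (by
    simp only [pconj, Fin.revPerm_apply, Fin.rev_rev, Equiv.trans_apply, Fin.rev_le_rev]) ?_
  rw [← Fin.revPerm.forall_congr_right]
  simp only [pconj, Fin.revPerm_apply, Fin.rev_rev, Fin.rev_le_rev, Equiv.trans_apply,
    Fin.rev_lt_rev, Equiv.symm_trans, Fin.revPerm_symm]
  exact forall_congr' fun s => Imp.swap

def IsAdmissibleLeft (x : Equiv.Perm (Fin n)) (i v : Fin n) : Prop :=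
  v ≤ x i ∧ ∀ s, v ≤ s → s < x i → x.symm s < i

def IsAdmissibleRight (x y : Equiv.Perm (Fin n)) (i w : Fin n) : Prop :=
  x i ≤ w ∧ y i ≤ w ∧ ∀ s, y i < s → s ≤ w → i < y.symm s

theorem isIPF_and_outcomes_iff (x y : Equiv.Perm (Fin n)) (a b : Fin n → Fin n) :
    (IsIPF a b ∧ IsAOutcome a x ∧ IsAOutcome (pconj b) (pconj y)) ↔
      (∀ i, IsAdmissibleLeft x i (a i)) ∧ ∀ i, IsAdmissibleRight x y i (b i) := by
  constructor
  · rintro ⟨hab, ha, hb⟩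
    have hxb := (isIPF_iff_of_isAOutcome ha).1 hab
    rw [isAOutcome_perm_iff] at ha
    rw [isAOutcome_pconj_iff] at hb
    exact ⟨ha, fun i => ⟨hxb i, hb i⟩⟩
  · rintro ⟨ha, hb⟩
    have ha' : IsAOutcome a x := (isAOutcome_perm_iff x).2 ha
    exact ⟨(isIPF_iff_of_isAOutcome ha').2 fun i => (hb i).1, ha',
      (isAOutcome_pconj_iff y).2 fun i => (hb i).2⟩

theorem lt_sSup_prefix_iff {P : ℕ → Prop} {m k : ℕ} :
    k < sSup {j | 1 ≤ j ∧ j ≤ m ∧ ∀ l < j, P l} ↔ k < m ∧ ∀ l ≤ k, P l := by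
  rw [lt_csSup_iff' ⟨m, fun j hj => hj.2.1⟩]
  constructor
  · rintro ⟨j, ⟨-, hjm, hP⟩, hkj⟩
    exact ⟨by omega, fun l hl => hP l (by omega)⟩
  · rintro ⟨hkm, hP⟩
    exact ⟨k + 1, ⟨by omega, hkm, fun l hl => hP l (by omega)⟩, by omega⟩

theorem lt_cval_iff (x : Equiv.Perm (Fin n)) (i : Fin n) (k : ℕ) :
    k < cval x i ↔ k ≤ x i ∧ ∀ s : Fin n, (x i : ℕ) ≤ s + k → s ≤ x i → x.symm s ≤ i := by
  unfold cval
  rw [lt_sSup_prefix_iff]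
  refine and_congr (by omega) ⟨fun h s hk hs => ?_, fun h l hl => h _ ?_ ?_⟩
  · rw [Fin.le_def]
    convert h (x i - s) (by omega) using 4
    omega
  · simp only
    omega
  · rw [Fin.le_def]
    simp only
    omega

theorem lt_Jval_iff (y : Equiv.Perm (Fin n)) (i : Fin n) (k : ℕ) :
    k < Jval y i ↔ y i + k < n ∧ ∀ s : Fin n, y i ≤ s → (s : ℕ) ≤ y i + k → i ≤ y.symm s := by
  unfold Jval
  rw [lt_sSup_prefix_iff]
  refine and_congr (by omega) ⟨fun h s hs hk => ?_, fun h l hl hlt => h _ ?_ ?_⟩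
  · rw [Fin.le_def]
    convert h (s - y i) (by omega) (by omega) using 4
    omega
  · rw [Fin.le_def]
    simp only
    omega
  · simp only
    omega

theorem isAdmissibleLeft_iff {x : Equiv.Perm (Fin n)} {i v : Fin n} :
    IsAdmissibleLeft x i v ↔ (v : ℕ) ≤ x i ∧ (x i : ℕ) < v + cval x i := by
  rw [IsAdmissibleLeft, Fin.le_def]
  refine and_congr_right fun hv => ?_
  rw [show (x i : ℕ) < v + cval x i ↔ (x i : ℕ) - v < cval x i by omega, lt_cval_iff]
  refine ⟨fun h => ⟨by omega, fun s hk hs => ?_⟩, fun h s hvs hs => ?_⟩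
  · rcases hs.lt_or_eq with hs | rfl
    · exact (h s (by omega) hs).le
    · simp
  · refine (h.2 s (by omega) hs.le).lt_of_ne fun hsi => ?_
    rw [← hsi, Equiv.apply_symm_apply] at hs
    exact hs.false

theorem isAdmissibleRight_iff {x y : Equiv.Perm (Fin n)} {i w : Fin n} :
    IsAdmissibleRight x y i w ↔ (x i : ℕ) ≤ w ∧ (y i : ℕ) ≤ w ∧ (w : ℕ) < y i + Jval y i := by
  rw [IsAdmissibleRight, Fin.le_def, Fin.le_def]
  refine and_congr_right fun _ => and_congr_right fun hw => ?_
  rw [show (w : ℕ) < y i + Jval y i ↔ (w : ℕ) - y i < Jval y i by omega, lt_Jval_iff]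
  refine ⟨fun h => ⟨by omega, fun s hs hk => ?_⟩, fun h s hys hs => ?_⟩
  · rcases hs.lt_or_eq with hs | rfl
    · exact (h s hs (by omega)).le
    · simp
  · refine (h.2 s hys.le (by omega)).lt_of_ne fun hsi => ?_
    rw [hsi, Equiv.apply_symm_apply] at hys
    exact hys.false

theorem natCard_fin_subtype_eq_card {p : Fin n → Prop} {s : Finset ℕ}
    (hp : ∀ v : Fin n, p v ↔ (v : ℕ) ∈ s) (hs : ∀ m ∈ s, m < n) :
    Nat.card {v // p v} = #s := by
  classical
  rw [Nat.card_eq_fintype_card, Fintype.card_subtype]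
  exact card_bij (fun v _ => v.val) (by simp [hp]) (fun _ _ _ _ => Fin.ext)
    fun m hm => ⟨⟨m, hs m hm⟩, by simp [hp, hm], rfl⟩

theorem card_isAdmissibleLeft (x : Equiv.Perm (Fin n)) (i : Fin n) :
    Nat.card {v // IsAdmissibleLeft x i v} = cval x i := by
  have hc : cval x i ≤ x i + 1 := by
    by_contra! h
    have := ((lt_cval_iff x i (x i + 1)).1 h).1
    omega
  rw [natCard_fin_subtype_eq_card (s := Ico (x i + 1 - cval x i) (x i + 1)), Nat.card_Ico]
  · omega
  · intro v
    rw [isAdmissibleLeft_iff, mem_Ico]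
    omega
  · intro m hm
    rw [mem_Ico] at hm
    omega

theorem card_isAdmissibleRight (x y : Equiv.Perm (Fin n)) (i : Fin n) :
    Nat.card {w // IsAdmissibleRight x y i w} = dval x y i := by
  have hJ : y i + Jval y i ≤ n := by
    rcases Nat.eq_zero_or_pos (Jval y i) with h | h
    · omega
    · have := ((lt_Jval_iff y i (Jval y i - 1)).1 (by omega)).1
      omega
  rw [dval, ← card_image_of_injective _ (add_right_injective (y i : ℕ))]
  apply natCard_fin_subtype_eq_card
  · intro w
    rw [isAdmissibleRight_iff, mem_image]
    constructor
    · rintro ⟨hx, hy, hw⟩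
      exact ⟨w - y i, by simp only [mem_filter, mem_range]; omega, by omega⟩
    · rintro ⟨k, hk, hkw⟩
      simp only [mem_filter, mem_range] at hk
      omega
  · simp only [mem_image, mem_filter, mem_range]
    rintro _ ⟨k, hk, rfl⟩
    omega

end

/-- The number of IPFs `(a,b)` with `O(a) = x` and `O(b*)* = y`
equals `∏ᵢ cᵢ·dᵢ`. -/
theorem stmt5 {n : ℕ} (x y : Equiv.Perm (Fin n)) :
    Nat.card {p : (Fin n → Fin n) × (Fin n → Fin n) //
        IsIPF p.1 p.2 ∧ IsAOutcome p.1 ⇑x ∧ IsAOutcome (pconj p.2) (pconj ⇑y)} =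
      ∏ i : Fin n, cval x i * dval x y i := by
  let e := (Equiv.subtypeEquivRight fun p : (Fin n → Fin n) × (Fin n → Fin n) =>
      isIPF_and_outcomes_iff x y p.1 p.2).trans <|
    Equiv.subtypeProdEquivProd.trans <|
      Equiv.subtypePiEquivPi.prodCongr Equiv.subtypePiEquivPi
  rw [Nat.card_congr e, Nat.card_prod, Nat.card_pi, Nat.card_pi, ← Finset.prod_mul_distrib]
  simp only [card_isAdmissibleLeft, card_isAdmissibleRight]
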